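/- With Γ the heat kernel and b(s) = √(2s+1) as above, there exists a constant C such that for all 0 ≤ τ < s and Δs ≥ 0, |∂_y Γ(b(s+Δs), s+Δs, b(τ+Δs), τ+Δs) − ∂_y Γ(b(s), s, b(τ), τ)| ≤ C · Δs · (s−τ)^{−1/2}. -/
import Mathlib


/-- The `y`-derivative of the heat kernel evaluated along the moving boundary
`b(s) = √(2s+1)`:
`∂_y Γ(b(s), s, b(τ), τ) = (4π(s-τ))^{-1/2} exp(-(b(s)-b(τ))²/(4(s-τ))) · (-(b(s)-b(τ))/(2(s-τ)))`. -/
noncomputable def heatKernelDerivAtBoundary (s τ : ℝ) : ℝ :=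
  (4 * Real.pi * (s - τ)) ^ (-(1/2) : ℝ) *
    Real.exp (-(Real.sqrt (2 * s + 1) - Real.sqrt (2 * τ + 1)) ^ 2 / (4 * (s - τ))) *
    (-(Real.sqrt (2 * s + 1) - Real.sqrt (2 * τ + 1)) / (2 * (s - τ)))

lemma one_le_sqrt' {x : ℝ} (hx : 1 ≤ x) : 1 ≤ Real.sqrt x := by
  have h' : Real.sqrt 1 ≤ Real.sqrt x := Real.sqrt_le_sqrt hx
  simpa using h'

/-- `exp` is 1-Lipschitz on the nonpositive reals. -/
lemma exp_lipschitz_nonpos {x y : ℝ} (hx : x ≤ 0) (hy : y ≤ 0) :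
    |Real.exp x - Real.exp y| ≤ |x - y| := by
  wlog h : y ≤ x generalizing x y
  · rw [abs_sub_comm, abs_sub_comm x y]
    exact this hy hx (le_of_not_ge h)
  have h1 : Real.exp y ≤ Real.exp x := Real.exp_le_exp.2 h
  rw [abs_of_nonneg (by linarith), abs_of_nonneg (by linarith)]
  have hx1 : Real.exp x ≤ 1 := Real.exp_le_one_iff.2 hx
  have h2 := Real.add_one_le_exp (y - x)
  have hxy : Real.exp y = Real.exp x * Real.exp (y - x) := by
    rw [← Real.exp_add]; ring_nf
  nlinarith [Real.exp_pos x]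

/-- Core Lipschitz estimate for `B ↦ exp(-d/B²)/B`. -/
lemma core_est {d B1 B2 : ℝ} (hd : 0 < d) (h2 : 2 ≤ B2) (h12 : B2 ≤ B1)
    (hdB : d ≤ B2 ^ 2 / 2) :
    |Real.exp (-(d / B1 ^ 2)) / B1 - Real.exp (-(d / B2 ^ 2)) / B2|
      ≤ (B1 - B2) / 2 := by
  have hB2 : (0:ℝ) < B2 := by linarith
  have hB1 : (0:ℝ) < B1 := by linarith
  set e1 := Real.exp (-(d / B1 ^ 2)) with he1
  set e2 := Real.exp (-(d / B2 ^ 2)) with he2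
  have he1pos : 0 < e1 := Real.exp_pos _
  have he2pos : 0 < e2 := Real.exp_pos _
  have harg1 : -(d / B1 ^ 2) ≤ 0 := neg_nonpos.2 (by positivity)
  have harg2 : -(d / B2 ^ 2) ≤ 0 := neg_nonpos.2 (by positivity)
  have he2le : e2 ≤ 1 := Real.exp_le_one_iff.2 harg2
  have h12' : (0:ℝ) ≤ B1 - B2 := sub_nonneg.2 h12
  have hargdiff : |(-(d / B1 ^ 2)) - (-(d / B2 ^ 2))| ≤ (B1 - B2) / 2 := by
    have hmono : d / B1 ^ 2 ≤ d / B2 ^ 2 :=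
      div_le_div_of_nonneg_left hd.le (by positivity) (by nlinarith)
    rw [abs_of_nonneg (by linarith)]
    have heq : -(d / B1 ^ 2) - -(d / B2 ^ 2) = d * (B1 ^ 2 - B2 ^ 2) / (B1 ^ 2 * B2 ^ 2) := by
      field_simp
      ring
    rw [heq, div_le_div_iff₀ (by positivity) (by norm_num)]
    have key1 : 2 * d * (B1 + B2) ≤ B1 ^ 2 * B2 ^ 2 := by
      nlinarith [mul_le_mul_of_nonneg_right (show 2 * d ≤ B2 ^ 2 by linarith)
          (show (0:ℝ) ≤ B1 + B2 by linarith),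
        mul_le_mul_of_nonneg_left (show B1 + B2 ≤ 2 * B1 by linarith)
          (show (0:ℝ) ≤ B2 ^ 2 by positivity),
        mul_nonneg (mul_nonneg (sq_nonneg B2) hB1.le) (show (0:ℝ) ≤ B1 - 2 by linarith)]
    nlinarith [mul_le_mul_of_nonneg_left key1 h12']
  have hexp : |e1 - e2| ≤ (B1 - B2) / 2 :=
    (exp_lipschitz_nonpos harg1 harg2).trans hargdiff
  have heq : e1 / B1 - e2 / B2 = (e1 - e2) / B1 + e2 * (B2 - B1) / (B1 * B2) := by
    field_simp
    ring
  rw [heq]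
  have hB1B2 : (4:ℝ) ≤ B1 * B2 := by nlinarith
  have t1 : |(e1 - e2) / B1| ≤ (B1 - B2) / 4 := by
    rw [abs_div, abs_of_pos hB1, div_le_iff₀ hB1]
    nlinarith [abs_nonneg (e1 - e2), mul_nonneg h12' (show (0:ℝ) ≤ B1 - 2 by linarith)]
  have t2 : |e2 * (B2 - B1) / (B1 * B2)| ≤ (B1 - B2) / 4 := by
    rw [abs_div, abs_of_pos (mul_pos hB1 hB2), abs_mul, abs_of_pos he2pos,
      abs_sub_comm B2 B1, abs_of_nonneg h12', div_le_iff₀ (mul_pos hB1 hB2)]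
    nlinarith [mul_nonneg h12' (sub_nonneg.2 he2le),
      mul_nonneg h12' (show (0:ℝ) ≤ B1 * B2 - 4 by linarith)]
  calc |(e1 - e2) / B1 + e2 * (B2 - B1) / (B1 * B2)|
      ≤ |(e1 - e2) / B1| + |e2 * (B2 - B1) / (B1 * B2)| := abs_add_le _ _
    _ ≤ (B1 - B2) / 4 + (B1 - B2) / 4 := add_le_add t1 t2
    _ = (B1 - B2) / 2 := by ring

/-- Rewriting the boundary derivative in the form `(4πd)^{-1/2} · (-(e^{-d/B²}/B))`. -/
lemma hkd_eq {s τ : ℝ} (hτ : 0 ≤ τ) (h : τ < s) :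
    heatKernelDerivAtBoundary s τ =
      (4 * Real.pi * (s - τ)) ^ (-(1/2) : ℝ) *
        (-(Real.exp (-((s - τ) /
            (Real.sqrt (2 * s + 1) + Real.sqrt (2 * τ + 1)) ^ 2)) /
          (Real.sqrt (2 * s + 1) + Real.sqrt (2 * τ + 1)))) := by
  have hd : 0 < s - τ := sub_pos.2 h
  set a := Real.sqrt (2 * s + 1) with ha
  set c := Real.sqrt (2 * τ + 1) with hc
  have ha1 : 1 ≤ a := one_le_sqrt' (by linarith)
  have hc1 : 1 ≤ c := one_le_sqrt' (by linarith)
  have ha2 : a ^ 2 = 2 * s + 1 := Real.sq_sqrt (by linarith)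
  have hc2 : c ^ 2 = 2 * τ + 1 := Real.sq_sqrt (by linarith)
  have hac : (0:ℝ) < a + c := by linarith
  have e1 : -(a - c) ^ 2 / (4 * (s - τ)) = -((s - τ) / (a + c) ^ 2) := by
    rw [← neg_div, div_eq_div_iff (by positivity) (by positivity)]
    linear_combination -(a ^ 2 - c ^ 2 + 2 * s - 2 * τ) * (ha2 - hc2)
  have e2 : -(a - c) / (2 * (s - τ)) = -(1 / (a + c)) := by
    rw [← neg_div, div_eq_div_iff (by positivity) (by positivity)]
    linear_combination hc2 - ha2
  unfold heatKernelDerivAtBoundary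
  rw [← ha, ← hc, e1, e2]
  ring

/-- Lipschitz estimate in the time shift: there is `C` such that for all `0 ≤ τ < s`
and `Δs ≥ 0`,
`|∂_y Γ(b(s+Δs), s+Δs, b(τ+Δs), τ+Δs) - ∂_y Γ(b(s), s, b(τ), τ)| ≤ C Δs (s-τ)^{-1/2}`. -/
theorem heat_kernel_deriv_time_shift_bound :
    ∃ C : ℝ, ∀ s τ Δs : ℝ, 0 ≤ τ → τ < s → 0 ≤ Δs →
      |heatKernelDerivAtBoundary (s + Δs) (τ + Δs) - heatKernelDerivAtBoundary s τ|
        ≤ C * Δs * (s - τ) ^ (-(1/2) : ℝ) := by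
  refine ⟨1, fun s τ Δ hτ hs hΔ => ?_⟩
  have hd : 0 < s - τ := sub_pos.2 hs
  have key : s + Δ - (τ + Δ) = s - τ := by ring
  rw [hkd_eq (by linarith) (by linarith), hkd_eq hτ hs, key]
  set d := s - τ with hdd
  set a := Real.sqrt (2 * s + 1) with ha
  set c := Real.sqrt (2 * τ + 1) with hc
  set A := Real.sqrt (2 * (s + Δ) + 1) with hA
  set c' := Real.sqrt (2 * (τ + Δ) + 1) with hc'
  have ha1 : 1 ≤ a := one_le_sqrt' (by linarith)
  have hc1 : 1 ≤ c := one_le_sqrt' (by linarith)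
  have hA1 : 1 ≤ A := one_le_sqrt' (by linarith)
  have hc'1 : 1 ≤ c' := one_le_sqrt' (by linarith)
  have ha2 : a ^ 2 = 2 * s + 1 := Real.sq_sqrt (by linarith)
  have hc2 : c ^ 2 = 2 * τ + 1 := Real.sq_sqrt (by linarith)
  have hA2 : A ^ 2 = 2 * (s + Δ) + 1 := Real.sq_sqrt (by linarith)
  have hc'2 : c' ^ 2 = 2 * (τ + Δ) + 1 := Real.sq_sqrt (by linarith)
  have haA : a ≤ A := Real.sqrt_le_sqrt (by linarith)
  have hcc : c ≤ c' := Real.sqrt_le_sqrt (by linarith)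
  have h2 : 2 ≤ a + c := by linarith
  have h12 : a + c ≤ A + c' := by linarith
  have hdB : d ≤ (a + c) ^ 2 / 2 := by
    nlinarith [mul_nonneg (show (0:ℝ) ≤ a by linarith) (show (0:ℝ) ≤ c by linarith),
      sq_nonneg c]
  have hBdiff : A + c' - (a + c) ≤ 2 * Δ := by
    have t1 : A - a ≤ Δ := by
      nlinarith [mul_nonneg (sub_nonneg.2 haA) (show (0:ℝ) ≤ A + a - 2 by linarith)]
    have t2 : c' - c ≤ Δ := by
      nlinarith [mul_nonneg (sub_nonneg.2 hcc) (show (0:ℝ) ≤ c' + c - 2 by linarith)]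
    linarith
  have hcore := core_est hd h2 h12 hdB
  have habs :
      |(4 * Real.pi * d) ^ (-(1/2) : ℝ) * (-(Real.exp (-(d / (A + c') ^ 2)) / (A + c'))) -
        (4 * Real.pi * d) ^ (-(1/2) : ℝ) * (-(Real.exp (-(d / (a + c) ^ 2)) / (a + c)))| =
      (4 * Real.pi * d) ^ (-(1/2) : ℝ) *
        |Real.exp (-(d / (A + c') ^ 2)) / (A + c') - Real.exp (-(d / (a + c) ^ 2)) / (a + c)| := by
    rw [← mul_sub, abs_mul, abs_of_nonneg (Real.rpow_nonneg (by positivity) _), ← abs_neg]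
    congr 1
    ring
  rw [habs]
  have hsplit : (4 * Real.pi * d) ^ (-(1/2) : ℝ)
      = (4 * Real.pi) ^ (-(1/2) : ℝ) * d ^ (-(1/2) : ℝ) :=
    Real.mul_rpow (by positivity) hd.le
  have hple : (4 * Real.pi) ^ (-(1/2) : ℝ) ≤ 1 :=
    Real.rpow_le_one_of_one_le_of_nonpos (by nlinarith [Real.pi_gt_three]) (by norm_num)
  have hfin : |Real.exp (-(d / (A + c') ^ 2)) / (A + c')
      - Real.exp (-(d / (a + c) ^ 2)) / (a + c)| ≤ Δ :=
    hcore.trans (by linarith)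
  calc (4 * Real.pi * d) ^ (-(1/2) : ℝ) *
        |Real.exp (-(d / (A + c') ^ 2)) / (A + c') - Real.exp (-(d / (a + c) ^ 2)) / (a + c)|
      ≤ (1 * d ^ (-(1/2) : ℝ)) * Δ := by
        rw [hsplit]
        refine mul_le_mul ?_ hfin (abs_nonneg _) ?_
        · exact mul_le_mul_of_nonneg_right hple (Real.rpow_nonneg hd.le _)
        · positivity
    _ = 1 * Δ * d ^ (-(1/2) : ℝ) := by ring
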